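/- Let S be a semigroup that is the disjoint union of free monogenic subsemigroups ⟨a⟩, ⟨b⟩, ⟨c⟩, and suppose ab = ba = a^i, ac = c², ca = a², bc = c^j, cb = a^k for positive integers i, j, k. Then i = j = k. -/

import Mathlib

/-! Associativity evaluates `acbc` both as `(ac)(bc) = c²cʲ` and as `a(cb)c = a·aᵏ·c`, so
`c^(j+2) = c^(k+2)`; likewise `abcb` is both `(ab)(cb) = aⁱaᵏ` and `a(bc)b = cʲ⁺¹b = cʲaᵏ`,
so `a^(i+k) = a^(j+k)`. Since `a` and `c` have infinite order, `j = k` and `i = j`. -/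

/-- `pw a n` is `a ^ n` for `n ≥ 1` (with junk value `a` at `n = 0`),
defined in any magma. -/
def pw {S : Type*} [Mul S] (a : S) : ℕ → S
  | 0 => a
  | 1 => a
  | n + 2 => pw a (n + 1) * a

/-- The monogenic subsemigroup `⟨a⟩ = {a^n : n ≥ 1}`. -/
def genSet {S : Type*} [Mul S] (a : S) : Set S := {x | ∃ n, 1 ≤ n ∧ pw a n = x}

/-- `a` has infinite order: its positive powers are pairwise distinct,
i.e. `⟨a⟩` is free monogenic. -/
def InfOrder {S : Type*} [Mul S] (a : S) : Prop :=
  ∀ m n : ℕ, 1 ≤ m → 1 ≤ n → pw a m = pw a n → m = n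

section Semigroup

variable {S : Type*} [Semigroup S]

lemma pw_succ (a : S) {n : ℕ} (hn : 1 ≤ n) : pw a (n + 1) = pw a n * a := by
  obtain ⟨m, rfl⟩ := Nat.exists_eq_add_of_le' hn
  rfl

lemma pw_add (a : S) {m n : ℕ} (hm : 1 ≤ m) (hn : 1 ≤ n) :
    pw a m * pw a n = pw a (m + n) := by
  induction n, hn using Nat.le_induction with
  | base => exact (pw_succ a hm).symm
  | succ n hn ih =>
    rw [pw_succ a hn, ← mul_assoc, ih, ← pw_succ a (by omega), Nat.add_assoc]

lemma mul_pw_of_mul_eq_mul_self {x y : S} (h : x * y = y * y) {n : ℕ} (hn : 1 ≤ n) :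
    x * pw y n = pw y (n + 1) := by
  induction n, hn using Nat.le_induction with
  | base => exact h
  | succ n hn ih => rw [pw_succ y hn, ← mul_assoc, ih, ← pw_succ y (by omega)]

lemma pw_mul_pw_of_mul_eq_mul_self {x y : S} (h : x * y = y * y) {m n : ℕ}
    (hm : 1 ≤ m) (hn : 1 ≤ n) : pw x m * pw y n = pw y (n + m) := by
  induction m, hm using Nat.le_induction with
  | base => exact mul_pw_of_mul_eq_mul_self h hn
  | succ m hm ih =>
    have hsucc : pw x (m + 1) = x * pw x m := by rw [Nat.add_comm, ← pw_add x le_rfl hm]; rfl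
    rw [hsucc, mul_assoc, ih, mul_pw_of_mul_eq_mul_self h (by omega), Nat.add_assoc]

end Semigroup

theorem stmt_15_general {S : Type*} [Semigroup S] (a b c : S)
    (ha : InfOrder a) (hc : InfOrder c)
    (i j k : ℕ) (hi : 1 ≤ i) (hj : 1 ≤ j) (hk : 1 ≤ k)
    (h1 : a * b = pw a i)
    (h3 : a * c = pw c 2) (h4 : c * a = pw a 2)
    (h5 : b * c = pw c j) (h6 : c * b = pw a k) :
    i = j ∧ j = k := by
  have hc_eq : pw c (2 + j) = pw c (1 + (1 + k)) :=
    calc pw c (2 + j) = a * c * (b * c) := by rw [h3, h5, pw_add c one_le_two hj]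
      _ = pw a (1 + k) * pw c 1 := by
        rw [← pw_add a le_rfl hk, ← h6]; simp only [pw, mul_assoc]
      _ = pw c (1 + (1 + k)) := pw_mul_pw_of_mul_eq_mul_self h3 (by omega) le_rfl
  have ha_eq : pw a (i + k) = pw a (k + j) :=
    calc pw a (i + k) = a * b * (c * b) := by rw [h1, h6, pw_add a hi hk]
      _ = a * pw c j * b := by rw [← h5]; simp only [mul_assoc]
      _ = pw c j * pw a k := by
        rw [mul_pw_of_mul_eq_mul_self h3 hj, pw_succ c hj, mul_assoc, h6]
      _ = pw a (k + j) := pw_mul_pw_of_mul_eq_mul_self h4 hj hk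
  have hjk := hc _ _ (by omega) (by omega) hc_eq
  have hij := ha _ _ (by omega) (by omega) ha_eq
  omega

theorem stmt_15 {S : Type*} [Semigroup S] (a b c : S)
    (ha : InfOrder a) (hb : InfOrder b) (hc : InfOrder c)
    (hab : genSet a ∩ genSet b = ∅) (hac : genSet a ∩ genSet c = ∅)
    (hbc : genSet b ∩ genSet c = ∅)
    (hcover : genSet a ∪ genSet b ∪ genSet c = Set.univ)
    (i j k : ℕ) (hi : 1 ≤ i) (hj : 1 ≤ j) (hk : 1 ≤ k)
    (h1 : a * b = pw a i) (h2 : b * a = pw a i)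
    (h3 : a * c = pw c 2) (h4 : c * a = pw a 2)
    (h5 : b * c = pw c j) (h6 : c * b = pw a k) :
    i = j ∧ j = k :=
  stmt_15_general a b c ha hc i j k hi hj hk h1 h3 h4 h5 h6
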